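/- arXiv:1804.05035 — 2 statements merged into one kernel-verified Lean document; each statement's English description precedes it below -/
import Mathlib

section
/- Let d ≥ 2, ε > 0, and let X = X(A,a,b,δ) be an Engel set with 0 < a < b and 2dR − ε < 2db, where R = √(b² + (d-1)a²). Then all (2dR − ε)-clusters of X are mutually equivalent: N_X(2dR − ε) = 1. In particular this holds whenever a² ≤ εb/(d(d−1)). -/
noncomputable section
open scoped Pointwise

/-- Euclidean d-space. -/
abbrev Euc (d : ℕ) : Type := EuclideanSpace ℝ (Fin d)

/-- The 1-based standard basis vector `e_k` of `ℝ^d` (for `1 ≤ k ≤ d`). -/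
def eVec (d k : ℕ) : Euc d :=
  if h : k - 1 < d then EuclideanSpace.single ⟨k - 1, h⟩ (1 : ℝ) else 0

/-- Conditions (A1)–(A3) on the doubly-infinite integer sequence `A`. -/
def EngelSeq (d : ℕ) (A : ℤ → ℤ) : Prop :=
  (∀ i : ℤ, 1 ≤ (A i).natAbs ∧ (A i).natAbs ≤ d - 1) ∧
  (∀ i : ℤ, (A (i + (d - 1))).natAbs = (A i).natAbs) ∧
  (∀ s : ℕ, 1 ≤ s → s ≤ d - 1 → ∃ i : ℤ, 1 ≤ i ∧ i ≤ d - 1 ∧ (A i).natAbs = s)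

/-- The vector `u_i = sign(a_i) e_{|a_i|}`. -/
def engelU (d : ℕ) (A : ℤ → ℤ) (i : ℤ) : Euc d :=
  (if 0 < A i then (1 : ℝ) else -1) • eVec d (A i).natAbs

/-- The cumulative sum `u_1 + ⋯ + u_i` (with the natural convention for `i ≤ 0`,
so that `engelCum 0 = 0` and `engelCum i - engelCum (i-1) = u_i` for all `i`). -/
def engelCum (d : ℕ) (A : ℤ → ℤ) (i : ℤ) : Euc d :=
  if 0 ≤ i then ∑ j ∈ Finset.range i.toNat, engelU d A ((j : ℤ) + 1)
  else -∑ j ∈ Finset.range (-i).toNat, engelU d A (-(j : ℤ))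

/-- The translation vector placing layer `m` of an Engel set:
layer `m` lies at height `2bm`, and the horizontal shifts `δ·u_i` accumulate
according to (E3), (E4). (Integer division is floor division.) -/
def engelOffset (d : ℕ) (A : ℤ → ℤ) (b δ : ℝ) (m : ℤ) : Euc d :=
  ((2 * b) * (m : ℝ)) • eVec d d + δ • engelCum d A (m / 2)

/-- The horizontal grid `Y = 2aℤ^{d-1} × {0}` in `ℝ^d`. -/
def engelGrid (d : ℕ) (a : ℝ) : Set (Euc d) :=
  {x | ∀ j : Fin d, ((j : ℕ) < d - 1 → ∃ m : ℤ, x j = 2 * a * (m : ℝ)) ∧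
        ((j : ℕ) = d - 1 → x j = 0)}

/-- Layer `X_m` of the Engel set `X(A,a,b,δ)`. -/
def engelLayer (d : ℕ) (A : ℤ → ℤ) (a b δ : ℝ) (m : ℤ) : Set (Euc d) :=
  engelOffset d A b δ m +ᵥ engelGrid d a

/-- The Engel set `X(A,a,b,δ) = ⋃_m X_m`. -/
def engelSet (d : ℕ) (A : ℤ → ℤ) (a b δ : ℝ) : Set (Euc d) :=
  ⋃ m : ℤ, engelLayer d A a b δ m

/-- A Delone set of type `(r,R)`: every open `r`-ball contains at most one point of `X`,
and every closed `R`-ball contains at least one point of `X`. -/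
def IsDeloneSet {V : Type*} [MetricSpace V] (X : Set V) (r R : ℝ) : Prop :=
  (∀ y : V, (X ∩ Metric.ball y r).Subsingleton) ∧
  (∀ y : V, (X ∩ Metric.closedBall y R).Nonempty)

/-- The ρ-cluster of `X` at `x`. -/
def cluster {V : Type*} [MetricSpace V] (X : Set V) (x : V) (ρ : ℝ) : Set V :=
  X ∩ Metric.closedBall x ρ

/-- Equivalence of the ρ-clusters of `X` at `x` and `x'`: an isometry of the ambient
space carries the one cluster onto the other, mapping center to center. -/
def ClustersEquiv {V : Type*} [MetricSpace V] (X : Set V) (x x' : V) (ρ : ℝ) : Prop :=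
  ∃ g : V ≃ᵢ V, g x = x' ∧ g '' cluster X x ρ = cluster X x' ρ

/-- A regular system: the symmetry group of `X` acts transitively on `X`. -/
def IsRegularSystem {V : Type*} [MetricSpace V] (X : Set V) : Prop :=
  ∀ x ∈ X, ∀ y ∈ X, ∃ g : V ≃ᵢ V, g '' X = X ∧ g x = y

/-!
Points of the layer `X_m` have last coordinate `2bm`, so a cluster of radius `ρ < 2db` centred
in `X_m` meets only the layers `X_{m+k}` with `|k| ≤ d - 1`. Their horizontal offsets differ by
`d - 1` consecutive steps `δ u_i`, whose directions `|a_i|` run through all of `1, …, d - 1` by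
(A1)–(A3). A signed permutation of the coordinates, which preserves the grid
`2aℤ^{d-1} × {0}`, therefore carries the steps around any layer onto those around any other
layer: in reverse order and composed with `-1` when the two layers have different parity. The
affine isometry `y ↦ x' + L (y - x)` then maps one cluster onto the other.
-/

theorem eVec_eq_single {d k : ℕ} (hk : k - 1 < d) :
    eVec d k = EuclideanSpace.single ⟨k - 1, hk⟩ 1 :=
  dif_pos hk

theorem map_sub_eq_sub_of_increments {V W F : Type*} [AddCommGroup V] [AddCommGroup W]
    [FunLike F V W] [AddMonoidHomClass F V W] (L : F) {f : ℤ → V} {g : ℤ → W} {lo hi : ℤ}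
    (h : ∀ r, lo < r → r ≤ hi → L (f r - f (r - 1)) = g r - g (r - 1))
    {q₀ q : ℤ} (hq₀ : q₀ ∈ Set.Icc lo hi) (hq : q ∈ Set.Icc lo hi) :
    L (f q - f q₀) = g q - g q₀ := by
  have hconst : ∀ q, lo ≤ q → q ≤ hi → L (f q) - g q = L (f lo) - g lo := by
    intro q hlo
    induction q, hlo using Int.leInduction with
    | base => exact fun _ => rfl
    | succ r hr ih =>
      intro hr'
      have := h (r + 1) (by omega) hr'
      rw [add_sub_cancel_right, map_sub] at this
      exact (sub_eq_sub_iff_sub_eq_sub.2 this).trans (ih (by omega))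
  rw [map_sub, sub_eq_sub_iff_sub_eq_sub]
  exact (hconst q hq.1 hq.2).trans (hconst q₀ hq₀.1 hq₀.2).symm

theorem clustersEquiv_of_mapsTo {V : Type*} [MetricSpace V] {X : Set V} {x x' : V} {ρ : ℝ}
    (g : V ≃ᵢ V) (hg : g x = x') (h : Set.MapsTo g (cluster X x ρ) X)
    (h' : Set.MapsTo g.symm (cluster X x' ρ) X) : ClustersEquiv X x x' ρ := by
  have hball : ∀ y, g y ∈ Metric.closedBall x' ρ ↔ y ∈ Metric.closedBall x ρ := fun y => by
    rw [Metric.mem_closedBall, Metric.mem_closedBall, ← hg, g.dist_eq]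
  refine ⟨g, hg, Set.Subset.antisymm ?_ fun w hw => ⟨g.symm w, ⟨h' hw, ?_⟩, g.apply_symm_apply w⟩⟩
  · rintro _ ⟨y, hy, rfl⟩
    exact ⟨h hy, (hball y).2 hy.2⟩
  · rw [← hball, g.apply_symm_apply]
    exact hw.2

theorem two_mul_sqrt_sub_lt_of_sq_le {t a b ε : ℝ} (ht : 1 < t) (hε : 0 < ε)
    (h : a ^ 2 ≤ ε * b / (t * (t - 1))) :
    2 * t * √(b ^ 2 + (t - 1) * a ^ 2) - ε < 2 * t * b := by
  have htt : 0 < t * (t - 1) := mul_pos (by linarith) (by linarith)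
  rw [le_div_iff₀ htt] at h
  have hb : 0 ≤ b := by nlinarith [sq_nonneg a]
  have hsqrt : √(b ^ 2 + (t - 1) * a ^ 2) < b + ε / (2 * t) := by
    rw [Real.sqrt_lt' (by positivity)]
    calc b ^ 2 + (t - 1) * a ^ 2 ≤ b ^ 2 + ε * b / t := by
          rw [add_le_add_iff_left, le_div_iff₀ (by linarith)]
          nlinarith
      _ < b ^ 2 + ε * b / t + (ε / (2 * t)) ^ 2 := by
          have : 0 < (ε / (2 * t)) ^ 2 := by positivity
          linarith
      _ = (b + ε / (2 * t)) ^ 2 := by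
          field_simp
          ring
  calc 2 * t * √(b ^ 2 + (t - 1) * a ^ 2) - ε < 2 * t * (b + ε / (2 * t)) - ε := by
        gcongr
    _ = 2 * t * b := by
        field_simp
        ring

namespace EngelSeq

variable {d : ℕ} {A : ℤ → ℤ}

theorem two_le (hA : EngelSeq d A) : 2 ≤ d := by
  have := hA.1 0
  omega

theorem natAbs_eq_of_dvd_sub (hA : EngelSeq d A) {i j : ℤ} (h : ((d : ℤ) - 1) ∣ i - j) :
    (A i).natAbs = (A j).natAbs := by
  have hper : Function.Periodic (fun i => (A i).natAbs) ((d : ℤ) - 1) := fun i => hA.2.1 i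
  obtain ⟨t, ht⟩ := h
  simpa [show j = i - t * ((d : ℤ) - 1) by linarith] using (hper.sub_int_mul_eq t).symm

theorem exists_natAbs_eq (hA : EngelSeq d A) (c ε : ℤ) (hε : ε = 1 ∨ ε = -1) {s : ℕ}
    (hs₁ : 1 ≤ s) (hs₂ : s ≤ d - 1) : ∃ j : ℕ, j < d - 1 ∧ (A (c + ε * j)).natAbs = s := by
  obtain ⟨i, -, -, hi⟩ := hA.2.2 s hs₁ hs₂
  have hd : (0 : ℤ) < (d : ℤ) - 1 := by have := hA.two_le; omega
  set w := ε * (i - c) % ((d : ℤ) - 1)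
  have hw₀ : 0 ≤ w := Int.emod_nonneg _ hd.ne'
  refine ⟨w.toNat, by have := Int.emod_lt_of_pos (ε * (i - c)) hd; omega, ?_⟩
  rw [← hi, Int.toNat_of_nonneg hw₀]
  apply hA.natAbs_eq_of_dvd_sub
  obtain ⟨t, ht⟩ : ((d : ℤ) - 1) ∣ ε * (i - c) - w := Int.dvd_self_sub_emod
  refine ⟨-ε * t, ?_⟩
  rcases hε with rfl | rfl <;> linarith

theorem exists_perm (hA : EngelSeq d A) (c ε : ℤ) (hε : ε = 1 ∨ ε = -1) :
    ∃ σ : Equiv.Perm (Fin d),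
      (∀ j : Fin d, (j : ℕ) < d - 1 → (σ j : ℕ) = (A (c + ε * j)).natAbs - 1) ∧
      ∀ j, (σ j : ℕ) = d - 1 ↔ (j : ℕ) = d - 1 := by
  let F : Fin d → Fin d := fun j =>
    if (j : ℕ) < d - 1 then ⟨(A (c + ε * j)).natAbs - 1, by have := hA.1 (c + ε * j); omega⟩
    else j
  have hF : F.Surjective := by
    intro t
    by_cases ht : (t : ℕ) < d - 1
    · obtain ⟨j, hj, hjt⟩ := hA.exists_natAbs_eq c ε hε (s := t + 1) (by omega) (by omega)
      exact ⟨⟨j, by omega⟩, Fin.ext (by simp [F, hj, hjt])⟩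
    · exact ⟨t, by simp [F, ht]⟩
  refine ⟨Equiv.ofBijective F (Finite.surjective_iff_bijective.1 hF), fun j hj => ?_, fun j => ?_⟩
  · simp [F, hj]
  · by_cases hj : (j : ℕ) < d - 1
    · have := hA.1 (c + ε * j)
      simp only [Equiv.ofBijective_apply, hj, ↓reduceIte, F]
      omega
    · simp [F, hj]

end EngelSeq

section Grid

variable {d : ℕ} {a : ℝ}

theorem add_mem_engelGrid {z w : Euc d} (hz : z ∈ engelGrid d a) (hw : w ∈ engelGrid d a) :
    z + w ∈ engelGrid d a := fun j =>
  ⟨fun hj => by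
    obtain ⟨m, hm⟩ := (hz j).1 hj
    obtain ⟨n, hn⟩ := (hw j).1 hj
    exact ⟨m + n, by rw [PiLp.add_apply, hm, hn]; push_cast; ring⟩,
   fun hj => by simp [(hz j).2 hj, (hw j).2 hj]⟩

theorem sub_mem_engelGrid {z w : Euc d} (hz : z ∈ engelGrid d a) (hw : w ∈ engelGrid d a) :
    z - w ∈ engelGrid d a := fun j =>
  ⟨fun hj => by
    obtain ⟨m, hm⟩ := (hz j).1 hj
    obtain ⟨n, hn⟩ := (hw j).1 hj
    exact ⟨m - n, by rw [PiLp.sub_apply, hm, hn]; push_cast; ring⟩,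
   fun hj => by simp [(hz j).2 hj, (hw j).2 hj]⟩

def engelGridStabilizer (d : ℕ) (a : ℝ) : Subgroup (Euc d ≃ₗᵢ[ℝ] Euc d) where
  carrier := {L | ∀ z, L z ∈ engelGrid d a ↔ z ∈ engelGrid d a}
  one_mem' _ := Iff.rfl
  mul_mem' hL hL' z := (hL _).trans (hL' z)
  inv_mem' {L} hL z := by
    simpa [LinearIsometryEquiv.coe_inv] using (hL (L.symm z)).symm

theorem mem_engelGridStabilizer_of_mapsTo {L : Euc d ≃ₗᵢ[ℝ] Euc d}
    (h : Set.MapsTo L (engelGrid d a) (engelGrid d a))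
    (h' : Set.MapsTo L.symm (engelGrid d a) (engelGrid d a)) :
    L ∈ engelGridStabilizer d a := fun z =>
  ⟨fun hz => by simpa using h' hz, fun hz => h hz⟩

theorem mapsTo_piLpCongrRight_engelGrid (e : Fin d → ℝ ≃ₗᵢ[ℝ] ℝ) :
    Set.MapsTo (LinearIsometryEquiv.piLpCongrRight 2 e) (engelGrid d a) (engelGrid d a) := by
  intro z hz j
  have he : ∀ t, e j t = t * e j 1 := fun t => by
    simpa using (e j).map_smul t 1
  have he₁ : |e j 1| = 1 := by simpa only [Real.norm_eq_abs, abs_one] using (e j).norm_map 1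
  simp only [LinearIsometryEquiv.piLpCongrRight_apply, PiLp.toLp_apply]
  refine ⟨fun hj => ?_, fun hj => by rw [(hz j).2 hj, map_zero]⟩
  obtain ⟨m, hm⟩ := (hz j).1 hj
  rcases abs_eq (zero_le_one' ℝ) |>.1 he₁ with h | h
  · exact ⟨m, by rw [he, hm, h, mul_one]⟩
  · exact ⟨-m, by rw [he, hm, h]; push_cast; ring⟩

theorem mapsTo_piLpCongrLeft_engelGrid (σ : Equiv.Perm (Fin d))
    (hσ : ∀ i, (σ i : ℕ) = d - 1 ↔ (i : ℕ) = d - 1) :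
    Set.MapsTo (LinearIsometryEquiv.piLpCongrLeft 2 ℝ ℝ σ) (engelGrid d a) (engelGrid d a) := by
  intro z hz j
  have hσj := hσ (σ.symm j)
  rw [σ.apply_symm_apply] at hσj
  simp only [LinearIsometryEquiv.piLpCongrLeft_apply, Equiv.piCongrLeft'_apply]
  refine ⟨fun hj => (hz _).1 ?_, fun hj => (hz _).2 (hσj.1 hj)⟩
  have := (σ.symm j).isLt
  omega

theorem piLpCongrLeft_mem_engelGridStabilizer (σ : Equiv.Perm (Fin d))
    (hσ : ∀ i, (σ i : ℕ) = d - 1 ↔ (i : ℕ) = d - 1) :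
    LinearIsometryEquiv.piLpCongrLeft 2 ℝ ℝ σ ∈ engelGridStabilizer d a := by
  refine mem_engelGridStabilizer_of_mapsTo (mapsTo_piLpCongrLeft_engelGrid σ hσ) ?_
  rw [LinearIsometryEquiv.piLpCongrLeft_symm]
  refine mapsTo_piLpCongrLeft_engelGrid σ.symm fun i => ?_
  simpa using (hσ (σ.symm i)).symm

theorem piLpCongrRight_mem_engelGridStabilizer (e : Fin d → ℝ ≃ₗᵢ[ℝ] ℝ) :
    LinearIsometryEquiv.piLpCongrRight 2 e ∈ engelGridStabilizer d a :=
  mem_engelGridStabilizer_of_mapsTo (mapsTo_piLpCongrRight_engelGrid e)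
    (mapsTo_piLpCongrRight_engelGrid fun i => (e i).symm)

theorem neg_mem_engelGridStabilizer :
    LinearIsometryEquiv.neg ℝ ∈ engelGridStabilizer d a := by
  convert piLpCongrRight_mem_engelGridStabilizer (d := d) (a := a)
    fun _ => LinearIsometryEquiv.neg ℝ
  ext
  simp

end Grid

section Engel

variable {d : ℕ} {A : ℤ → ℤ}

theorem exists_engelFrame (hA : EngelSeq d A) (a : ℝ) (c ε : ℤ) (hε : ε = 1 ∨ ε = -1) :
    ∃ M ∈ engelGridStabilizer d a, M (eVec d d) = eVec d d ∧
      ∀ j : ℕ, j < d - 1 → M (eVec d (j + 1)) = engelU d A (c + ε * j) := by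
  obtain ⟨σ, hσ, hσlast⟩ := hA.exists_perm c ε hε
  let e : Fin d → ℝ ≃ₗᵢ[ℝ] ℝ := fun j =>
    if A (c + ε * j) < 0 ∧ (j : ℕ) < d - 1 then LinearIsometryEquiv.neg ℝ
    else LinearIsometryEquiv.refl ℝ ℝ
  have hd := hA.two_le
  refine ⟨LinearIsometryEquiv.piLpCongrLeft 2 ℝ ℝ σ * LinearIsometryEquiv.piLpCongrRight 2 e,
    mul_mem (piLpCongrLeft_mem_engelGridStabilizer σ hσlast)
      (piLpCongrRight_mem_engelGridStabilizer e), ?_, fun j hj => ?_⟩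
  · have hlast : σ ⟨d - 1, by omega⟩ = ⟨d - 1, by omega⟩ := Fin.ext ((hσlast _).2 rfl)
    rw [eVec_eq_single (by omega)]
    simp [e, hlast]
  · have hAj := hA.1 (c + ε * j)
    have hσj : σ ⟨j, by omega⟩ = ⟨(A (c + ε * j)).natAbs - 1, by omega⟩ :=
      Fin.ext (hσ ⟨j, by omega⟩ hj)
    rw [eVec_eq_single (by omega), engelU, eVec_eq_single (by omega)]
    simp only [LinearIsometryEquiv.coe_mul, Function.comp_apply, Nat.add_sub_cancel,
      LinearIsometryEquiv.piLpCongrRight_single, EuclideanSpace.piLpCongrLeft_single, hσj]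
    by_cases hpos : 0 < A (c + ε * j)
    · simp [e, hpos, hpos.not_gt]
    · have hneg : A (c + ε * j) < 0 := lt_of_le_of_ne (not_lt.1 hpos) (by omega)
      simp [e, hpos, hneg, hj, ← PiLp.single_neg]

theorem engelCum_sub_engelCum_sub_one (i : ℤ) :
    engelCum d A i - engelCum d A (i - 1) = engelU d A i := by
  rw [sub_eq_iff_eq_add']
  unfold engelCum
  rcases lt_trichotomy i 0 with hi | rfl | hi
  · rw [if_neg (by omega), if_neg (by omega),
      show (-(i - 1)).toNat = (-i).toNat + 1 by omega, Finset.sum_range_succ,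
      show -(((-i).toNat : ℕ) : ℤ) = i by omega]
    abel
  · simp
  · rw [if_pos (by omega), if_pos (by omega), show i.toNat = (i - 1).toNat + 1 by omega,
      Finset.sum_range_succ, show (((i - 1).toNat : ℕ) : ℤ) + 1 = i by omega]

theorem exists_engelWindowMap (hA : EngelSeq d A) (a : ℝ) (c c' ε : ℤ) (hε : ε = 1 ∨ ε = -1) :
    ∃ L ∈ engelGridStabilizer d a, L (eVec d d) = eVec d d ∧
      ∀ r : ℤ, 0 ≤ r → r < (d : ℤ) - 1 → L (engelU d A (c + r)) = engelU d A (c' + ε * r) := by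
  obtain ⟨M, hM, hMd, hMu⟩ := exists_engelFrame hA a c 1 (Or.inl rfl)
  obtain ⟨M', hM', hM'd, hM'u⟩ := exists_engelFrame hA a c' ε hε
  refine ⟨M' * M⁻¹, mul_mem hM' (inv_mem hM), ?_, fun r hr₀ hr => ?_⟩
  · rw [LinearIsometryEquiv.coe_mul, Function.comp_apply, LinearIsometryEquiv.coe_inv,
      M.symm_apply_eq.2 hMd.symm, hM'd]
  · lift r to ℕ using hr₀
    have hMr := hMu r (by omega)
    rw [one_mul] at hMr
    rw [LinearIsometryEquiv.coe_mul, Function.comp_apply, LinearIsometryEquiv.coe_inv,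
      M.symm_apply_eq.2 hMr.symm, hM'u r (by omega)]

/-- The range `|k| ≤ d - 1` covers every layer `X_{m+k}` that a cluster of radius `< 2db`
centred in `X_m` can meet. -/
structure IsLayerCongr (d : ℕ) (A : ℤ → ℤ) (a b δ : ℝ) (m m' η : ℤ)
    (L : Euc d ≃ₗᵢ[ℝ] Euc d) : Prop where
  sign : η = 1 ∨ η = -1
  mem_stabilizer : L ∈ engelGridStabilizer d a
  map_offset_sub : ∀ k : ℤ, |k| ≤ (d : ℤ) - 1 →
    L (engelOffset d A b δ (m + k) - engelOffset d A b δ m) =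
      engelOffset d A b δ (m' + η * k) - engelOffset d A b δ m'

theorem isLayerCongr_of_map_engelCum {a : ℝ} (b δ : ℝ) {m m' η : ℤ}
    {L : Euc d ≃ₗᵢ[ℝ] Euc d} (hη : η = 1 ∨ η = -1) (hL : L ∈ engelGridStabilizer d a)
    (he : L (eVec d d) = (η : ℝ) • eVec d d)
    (hcum : ∀ k : ℤ, |k| ≤ (d : ℤ) - 1 →
      L (engelCum d A ((m + k) / 2) - engelCum d A (m / 2)) =
        engelCum d A ((m' + η * k) / 2) - engelCum d A (m' / 2)) :
    IsLayerCongr d A a b δ m m' η L := by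
  refine ⟨hη, hL, fun k hk => ?_⟩
  have hsplit : ∀ n n' : ℤ, engelOffset d A b δ n' - engelOffset d A b δ n =
      (2 * b * (n' - n : ℤ)) • eVec d d +
        δ • (engelCum d A (n' / 2) - engelCum d A (n / 2)) := fun n n' => by
    simp only [engelOffset]
    push_cast
    module
  rw [hsplit, hsplit, map_add, map_smul, map_smul, he, hcum k hk, smul_smul]
  congr 2
  push_cast
  ring

theorem map_engelCum_sub_of_increments (L : Euc d ≃ₗᵢ[ℝ] Euc d) {m m' η : ℤ}
    (hpar : ∀ k : ℤ, (m' + η * k) / 2 - m' / 2 = η * ((m + k) / 2 - m / 2))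
    (hstep : ∀ r : ℤ, (m - (d - 1)) / 2 - m / 2 < r → r ≤ (m + (d - 1)) / 2 - m / 2 →
      L (engelU d A (m / 2 + r)) =
        engelCum d A (m' / 2 + η * r) - engelCum d A (m' / 2 + η * (r - 1)))
    (k : ℤ) (hk : |k| ≤ (d : ℤ) - 1) :
    L (engelCum d A ((m + k) / 2) - engelCum d A (m / 2)) =
      engelCum d A ((m' + η * k) / 2) - engelCum d A (m' / 2) := by
  obtain ⟨hk₁, hk₂⟩ := abs_le.1 hk
  have key := map_sub_eq_sub_of_increments L (f := fun r => engelCum d A (m / 2 + r))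
    (g := fun r => engelCum d A (m' / 2 + η * r)) (lo := (m - (d - 1)) / 2 - m / 2)
    (hi := (m + (d - 1)) / 2 - m / 2) (fun r hr₁ hr₂ => ?_)
    (q₀ := 0) (q := (m + k) / 2 - m / 2) ⟨by omega, by omega⟩ ⟨by omega, by omega⟩
  · rw [show (m' + η * k) / 2 = m' / 2 + η * ((m + k) / 2 - m / 2) by linarith [hpar k]]
    simpa using key
  · simpa [← engelCum_sub_engelCum_sub_one, add_sub_assoc] using hstep r hr₁ hr₂

theorem exists_isLayerCongr (hA : EngelSeq d A) (a b δ : ℝ) (m m' : ℤ) :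
    ∃ η L, IsLayerCongr d A a b δ m m' η L := by
  set lo := (m - (d - 1)) / 2 - m / 2
  by_cases hpar : m % 2 = m' % 2
  · obtain ⟨L, hL, he, hu⟩ :=
      exists_engelWindowMap hA a (m / 2 + lo + 1) (m' / 2 + lo + 1) 1 (Or.inl rfl)
    refine ⟨1, L, isLayerCongr_of_map_engelCum b δ (Or.inl rfl) hL (by simpa using he)
      (map_engelCum_sub_of_increments L (fun k => by omega) fun r hr₁ hr₂ => ?_)⟩
    have := hu (r - lo - 1) (by omega) (by omega)
    rw [show m / 2 + lo + 1 + (r - lo - 1) = m / 2 + r by ring] at this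
    rw [this, ← engelCum_sub_engelCum_sub_one]
    congr 2 <;> ring
  · obtain ⟨L, hL, he, hu⟩ :=
      exists_engelWindowMap hA a (m / 2 + lo + 1) (m' / 2 - lo) (-1) (Or.inr rfl)
    refine ⟨-1, LinearIsometryEquiv.neg ℝ * L, isLayerCongr_of_map_engelCum b δ (Or.inr rfl)
      (mul_mem neg_mem_engelGridStabilizer hL) (by simp [he])
      (map_engelCum_sub_of_increments _ (fun k => by omega) fun r hr₁ hr₂ => ?_)⟩
    have := hu (r - lo - 1) (by omega) (by omega)
    rw [show m / 2 + lo + 1 + (r - lo - 1) = m / 2 + r by ring] at this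
    simp only [LinearIsometryEquiv.coe_mul, Function.comp_apply, LinearIsometryEquiv.coe_neg,
      this]
    rw [show m' / 2 - lo + -1 * (r - lo - 1) = m' / 2 + -1 * (r - 1) by ring,
      ← engelCum_sub_engelCum_sub_one, neg_sub,
      show m' / 2 + -1 * (r - 1) - 1 = m' / 2 + -1 * r by ring]

section Layers

variable {a b δ : ℝ}

theorem engelCum_apply_of_val_eq (hA : EngelSeq d A) (j : ℤ) {i : Fin d} (hi : (i : ℕ) = d - 1) :
    engelCum d A j i = 0 := by
  have hu : ∀ j, engelU d A j i = 0 := fun j => by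
    have := hA.1 j
    have hne : i ≠ ⟨(A j).natAbs - 1, by omega⟩ := fun h => by
      have := congrArg Fin.val h
      simp only at this
      omega
    rw [engelU, eVec_eq_single (by omega), PiLp.smul_apply, PiLp.single_apply, if_neg hne,
      smul_zero]
  unfold engelCum
  split_ifs <;> simp [hu]

theorem engelLayer_apply_of_val_eq (hA : EngelSeq d A) {m : ℤ} {x : Euc d}
    (hx : x ∈ engelLayer d A a b δ m) {i : Fin d} (hi : (i : ℕ) = d - 1) :
    x i = 2 * b * m := by
  obtain ⟨z, hz, rfl⟩ := Set.mem_vadd_set.1 hx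
  have hd := hA.two_le
  have he : eVec d d i = 1 := by
    rw [eVec_eq_single (by omega), PiLp.single_apply, if_pos (Fin.ext hi)]
  simp [engelOffset, he, engelCum_apply_of_val_eq hA _ hi, (hz i).2 hi]

theorem abs_sub_le_of_dist_le (hA : EngelSeq d A) {m n : ℤ} {x y : Euc d} {ρ : ℝ}
    (hx : x ∈ engelLayer d A a b δ m) (hy : y ∈ engelLayer d A a b δ n) (hxy : dist x y ≤ ρ)
    (hρ : ρ < 2 * d * b) : |n - m| ≤ (d : ℤ) - 1 := by
  have hd := hA.two_le
  have hd' : (2 : ℝ) ≤ d := by exact_mod_cast hd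
  have hcoord := PiLp.dist_apply_le x y ⟨d - 1, by omega⟩
  rw [Real.dist_eq, engelLayer_apply_of_val_eq hA hx rfl, engelLayer_apply_of_val_eq hA hy rfl,
    ← mul_sub, abs_mul] at hcoord
  have hb : 0 < b := by nlinarith [mul_nonneg (abs_nonneg (2 * b)) (abs_nonneg ((m : ℝ) - n))]
  have hmn : |((n - m : ℤ) : ℝ)| < d := by
    rw [abs_of_pos (by positivity : 0 < 2 * b)] at hcoord
    rw [Int.cast_sub, abs_sub_comm]
    nlinarith
  have : |n - m| < d := by exact_mod_cast hmn
  omega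

end Layers

namespace IsLayerCongr

variable {a b δ : ℝ} {m m' η : ℤ} {L : Euc d ≃ₗᵢ[ℝ] Euc d}

theorem symm (hL : IsLayerCongr d A a b δ m m' η L) : IsLayerCongr d A a b δ m' m η L⁻¹ := by
  have hηη : η * η = 1 := by rcases hL.sign with rfl | rfl <;> norm_num
  refine ⟨hL.sign, inv_mem hL.mem_stabilizer, fun k hk => ?_⟩
  have h := hL.map_offset_sub (η * k) (by rcases hL.sign with rfl | rfl <;> simpa using hk)
  rw [← mul_assoc, hηη, one_mul] at h
  rw [← h, LinearIsometryEquiv.coe_inv, LinearIsometryEquiv.symm_apply_apply]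

theorem add_map_sub_mem (hL : IsLayerCongr d A a b δ m m' η L) (hA : EngelSeq d A)
    {ρ : ℝ} (hρ : ρ < 2 * d * b) {x x' y : Euc d} (hx : x ∈ engelLayer d A a b δ m)
    (hx' : x' ∈ engelLayer d A a b δ m') (hy : y ∈ engelSet d A a b δ) (hxy : dist x y ≤ ρ) :
    x' + L (y - x) ∈ engelSet d A a b δ := by
  obtain ⟨n, hn⟩ := Set.mem_iUnion.1 hy
  have hk := abs_sub_le_of_dist_le hA hx hn hxy hρ
  obtain ⟨z, hz, rfl⟩ := Set.mem_vadd_set.1 hx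
  obtain ⟨z', hz', rfl⟩ := Set.mem_vadd_set.1 hx'
  obtain ⟨w, hw, rfl⟩ := Set.mem_vadd_set.1 hn
  have hoff := hL.map_offset_sub (n - m) hk
  rw [add_sub_cancel] at hoff
  refine Set.mem_iUnion.2 ⟨m' + η * (n - m), Set.mem_vadd_set.2 ⟨z' + L (w - z), ?_, ?_⟩⟩
  · exact add_mem_engelGrid hz' ((hL.mem_stabilizer _).2 (sub_mem_engelGrid hw hz))
  · simp only [vadd_eq_add]
    rw [show engelOffset d A b δ n + w - (engelOffset d A b δ m + z) =
        (engelOffset d A b δ n - engelOffset d A b δ m) + (w - z) by abel, map_add, hoff]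
    abel

theorem clustersEquiv (hL : IsLayerCongr d A a b δ m m' η L) (hA : EngelSeq d A) {ρ : ℝ}
    (hρ : ρ < 2 * d * b) {x x' : Euc d} (hx : x ∈ engelLayer d A a b δ m)
    (hx' : x' ∈ engelLayer d A a b δ m') : ClustersEquiv (engelSet d A a b δ) x x' ρ := by
  let g : Euc d ≃ᵢ Euc d :=
    (IsometryEquiv.subRight x).trans (L.toIsometryEquiv.trans (IsometryEquiv.addLeft x'))
  have hg : ∀ y, g y = x' + L (y - x) := fun y => by simp [g]
  have hg' : ∀ w, g.symm w = x + L⁻¹ (w - x') := fun w => g.symm_apply_eq.2 <| by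
    rw [hg, add_sub_cancel_left, LinearIsometryEquiv.coe_inv, L.apply_symm_apply, add_sub_cancel]
  refine clustersEquiv_of_mapsTo g (by simp [hg]) (fun y hy => ?_) (fun w hw => ?_)
  · rw [hg]
    exact hL.add_map_sub_mem hA hρ hx hx' hy.1 (by rw [dist_comm]; exact hy.2)
  · rw [hg']
    exact hL.symm.add_map_sub_mem hA hρ hx' hx hw.1 (by rw [dist_comm]; exact hw.2)

end IsLayerCongr

end Engel

theorem engelSet_clusters_equiv_general (d : ℕ) (A : ℤ → ℤ) (hA : EngelSeq d A)
    (a b δ ε : ℝ) (hε : 0 < ε)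
    (R : ℝ) (hR : R = Real.sqrt (b ^ 2 + ((d : ℝ) - 1) * a ^ 2))
    (h : 2 * (d : ℝ) * R - ε < 2 * (d : ℝ) * b ∨
      a ^ 2 ≤ ε * b / ((d : ℝ) * ((d : ℝ) - 1))) :
    ∀ x ∈ engelSet d A a b δ, ∀ x' ∈ engelSet d A a b δ,
      ClustersEquiv (engelSet d A a b δ) x x' (2 * (d : ℝ) * R - ε) := by
  have hρ : 2 * (d : ℝ) * R - ε < 2 * d * b := by
    refine h.elim id fun h => hR ▸ two_mul_sqrt_sub_lt_of_sq_le ?_ hε h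
    exact_mod_cast hA.two_le
  intro x hx x' hx'
  obtain ⟨m, hm⟩ := Set.mem_iUnion.1 hx
  obtain ⟨m', hm'⟩ := Set.mem_iUnion.1 hx'
  obtain ⟨η, L, hL⟩ := exists_isLayerCongr hA a b δ m m'
  exact hL.clustersEquiv hA hρ hm hm'

/-- Theorem 5.2: if `0 < a < b` and `2dR - ε < 2db` (in particular
whenever `a² ≤ εb/(d(d-1))`), where `R = √(b² + (d-1)a²)`, then all `(2dR - ε)`-clusters
of the Engel set `X(A,a,b,δ)` are mutually equivalent: `N_X(2dR - ε) = 1`. -/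
theorem engelSet_clusters_equiv (d : ℕ) (hd : 2 ≤ d) (A : ℤ → ℤ) (hA : EngelSeq d A)
    (a b δ ε : ℝ) (ha : 0 < a) (hab : a < b) (hδ : 0 < δ) (hε : 0 < ε)
    (R : ℝ) (hR : R = Real.sqrt (b ^ 2 + ((d : ℝ) - 1) * a ^ 2))
    (h : 2 * (d : ℝ) * R - ε < 2 * (d : ℝ) * b ∨
      a ^ 2 ≤ ε * b / ((d : ℝ) * ((d : ℝ) - 1))) :
    ∀ x ∈ engelSet d A a b δ, ∀ x' ∈ engelSet d A a b δ,
      ClustersEquiv (engelSet d A a b δ) x x' (2 * (d : ℝ) * R - ε) :=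
  engelSet_clusters_equiv_general d A hA a b δ ε hε R hR h
end
end

section
/- Let X = X(A,a,b,δ) be an Engel set with 0 < δ < a < b. Fix p ∈ ℤ and x ∈ X_p, and define the chain (x_j)_{j∈ℤ} by x₀ = x, x_{j+1} = x_j + 2b·e_d if p + j is even, and x_{j+1} = x_j + 2b·e_d + δ·uᵢ if p + j = 2i − 1 is odd (where uᵢ = sign(aᵢ)e_{|aᵢ|}). Then for each j, x_j is the unique point of layer X_{p+j} closest to x_{j+1} and also the unique point of X_{p+j} closest to x_{j-1}; moreover |x_j − x_{j-1}| = 2b and |x_{j+1} − x_j| = √(δ² + 4b²) if p + j is odd, and |x_j − x_{j-1}| = √(δ² + 4b²) and |x_{j+1} − x_j| = 2b if p + j is even. -/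
noncomputable section
open scoped Pointwise

/-! Passing from layer `X_m` to `X_{m+1}` is the step `2b e_d + s_m`, where the horizontal shift
`s_m` is `0` or `δ u_i`, so `‖s_m‖ ≤ δ`. Two distinct points of one layer differ by a nonzero
horizontal vector `w ∈ 2aℤ^{d-1} × {0}`, so `‖w‖ ≥ 2a > 2δ`. By Pythagoras in the vertical
direction, replacing the chain point by another point of its layer changes the distance to its
neighbour from `√(4b² + ‖s‖²)` to `√(4b² + ‖s - w‖²)`, and `‖s - w‖ ≥ ‖w‖ - ‖s‖ > δ ≥ ‖s‖`. -/

open RealInnerProductSpace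

lemma norm_add_lt_norm_add_sub {E : Type*} [NormedAddCommGroup E] [InnerProductSpace ℝ E]
    {e h w : E} (heh : ⟪e, h⟫ = 0) (hew : ⟪e, w⟫ = 0) (hw : 2 * ‖h‖ < ‖w‖) :
    ‖e + h‖ < ‖e + h - w‖ := by
  have hehw : ⟪e, h - w⟫ = 0 := by rw [inner_sub_right, heh, hew, sub_zero]
  have hlt : ‖h‖ < ‖h - w‖ := by linarith [norm_sub_norm_le w h, norm_sub_rev h w]
  rw [add_sub_assoc, mul_self_lt_mul_self_iff (norm_nonneg _) (norm_nonneg _),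
    norm_add_sq_eq_norm_sq_add_norm_sq_real heh, norm_add_sq_eq_norm_sq_add_norm_sq_real hehw]
  nlinarith [norm_nonneg h]

section EVec

variable {d : ℕ}

lemma norm_eVec {k : ℕ} (hk : 1 ≤ k) (hkd : k ≤ d) : ‖eVec d k‖ = 1 := by
  rw [eVec, dif_pos (by omega), PiLp.norm_single, norm_one]

lemma inner_eVec_eVec_of_ne {k l : ℕ} (hk : 1 ≤ k) (hkd : k ≤ d) (hl : 1 ≤ l) (hld : l ≤ d)
    (hkl : k ≠ l) : ⟪eVec d k, eVec d l⟫ = 0 := by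
  rw [eVec, eVec, dif_pos (by omega), dif_pos (by omega), EuclideanSpace.inner_single_left,
    PiLp.single_apply, if_neg (by simp [Fin.ext_iff]; omega), mul_zero]

lemma inner_eVec_last_eq_zero {v : Euc d}
    (hv : ∀ j : Fin d, (j : ℕ) = d - 1 → v j = 0) : ⟪eVec d d, v⟫ = 0 := by
  unfold eVec
  split_ifs
  · rw [EuclideanSpace.inner_single_left, hv _ rfl, mul_zero]
  · exact inner_zero_left _

end EVec

section Layers

variable {d : ℕ} {A : ℤ → ℤ} {a b δ : ℝ}

lemma engelCum_eq_sub_one_add (i : ℤ) :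
    engelCum d A i = engelCum d A (i - 1) + engelU d A i := by
  rcases lt_trichotomy i 0 with h | rfl | h
  · have h3 : (-(i - 1)).toNat = (-i).toNat + 1 := by omega
    have h4 : (((-i).toNat : ℤ)) = -i := by omega
    rw [engelCum, engelCum, if_neg (by omega), if_neg (by omega), h3, Finset.sum_range_succ, h4,
      neg_neg]
    abel
  · simp [engelCum]
  · have h3 : i.toNat = (i - 1).toNat + 1 := by omega
    have h4 : (((i - 1).toNat : ℤ)) + 1 = i := by omega
    rw [engelCum, engelCum, if_pos h.le, if_pos (by omega), h3, Finset.sum_range_succ, h4]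

-- For odd `m = 2i - 1` this is `δ • u_i`.
def engelShift (d : ℕ) (A : ℤ → ℤ) (δ : ℝ) (m : ℤ) : Euc d :=
  if m % 2 = 0 then 0 else δ • engelU d A ((m + 1) / 2)

def engelStep (d : ℕ) (A : ℤ → ℤ) (b δ : ℝ) (m : ℤ) : Euc d :=
  (2 * b) • eVec d d + engelShift d A δ m

lemma engelOffset_add_one (m : ℤ) :
    engelOffset d A b δ (m + 1) = engelOffset d A b δ m + engelStep d A b δ m := by
  rcases Int.even_or_odd' m with ⟨k, rfl | rfl⟩
  · have h1 : (2 * k + 1) / 2 = 2 * k / 2 := by omega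
    rw [engelOffset, engelOffset, engelStep, engelShift, if_pos (by omega), h1]
    push_cast
    module
  · have h1 : (2 * k + 1 + 1) / 2 = k + 1 := by omega
    have h2 : (2 * k + 1) / 2 = k := by omega
    rw [engelOffset, engelOffset, engelStep, engelShift, if_neg (by omega), h1, h2,
      engelCum_eq_sub_one_add (k + 1), add_sub_cancel_right]
    push_cast
    module

lemma mem_engelLayer_iff {m : ℤ} {y : Euc d} :
    y ∈ engelLayer d A a b δ m ↔ y - engelOffset d A b δ m ∈ engelGrid d a := by
  rw [engelLayer, Set.mem_vadd_set]
  constructor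
  · rintro ⟨g, hg, rfl⟩
    rwa [vadd_eq_add, add_sub_cancel_left]
  · exact fun h => ⟨_, h, by rw [vadd_eq_add, add_sub_cancel]⟩

end Layers

section Geometry

variable {d : ℕ} {A : ℤ → ℤ} {a b δ : ℝ}

lemma inner_eVec_sub_of_mem_engelGrid {g g' : Euc d} (hg : g ∈ engelGrid d a)
    (hg' : g' ∈ engelGrid d a) : ⟪eVec d d, g - g'⟫ = 0 :=
  inner_eVec_last_eq_zero fun j hj => by
    rw [PiLp.sub_apply, (hg j).2 hj, (hg' j).2 hj, sub_zero]

lemma two_mul_le_norm_sub_of_mem_engelGrid {g g' : Euc d} (hg : g ∈ engelGrid d a)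
    (hg' : g' ∈ engelGrid d a) (hne : g ≠ g') : 2 * a ≤ ‖g - g'‖ := by
  obtain ⟨j, hj⟩ : ∃ j, g j ≠ g' j := by
    by_contra! h
    exact hne (PiLp.ext h)
  have hjd : (j : ℕ) < d - 1 := by
    by_contra hjd
    exact hj (by rw [(hg j).2 (by omega), (hg' j).2 (by omega)])
  obtain ⟨m, hm⟩ := (hg j).1 hjd
  obtain ⟨m', hm'⟩ := (hg' j).1 hjd
  have hmm : (1 : ℝ) ≤ |((m - m' : ℤ) : ℝ)| := by
    rw [← Int.cast_abs]
    exact_mod_cast Int.one_le_abs (sub_ne_zero.2 fun h => hj (by rw [hm, hm', h]))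
  calc 2 * a ≤ 2 * |a| * |((m - m' : ℤ) : ℝ)| := by nlinarith [le_abs_self a, abs_nonneg a]
    _ = ‖(g - g') j‖ := by
      rw [PiLp.sub_apply, hm, hm', Real.norm_eq_abs]
      push_cast
      rw [← mul_sub, abs_mul, abs_mul, abs_two]
    _ ≤ ‖g - g'‖ := PiLp.norm_apply_le _ _

lemma norm_engelU {i : ℤ} (hAi : 1 ≤ (A i).natAbs ∧ (A i).natAbs ≤ d - 1) :
    ‖engelU d A i‖ = 1 := by
  rw [engelU, norm_smul, norm_eVec hAi.1 (by omega), mul_one]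
  split_ifs <;> norm_num

lemma inner_eVec_engelU {i : ℤ} (hAi : 1 ≤ (A i).natAbs ∧ (A i).natAbs ≤ d - 1) :
    ⟪eVec d d, engelU d A i⟫ = 0 := by
  rw [engelU, inner_smul_right, inner_eVec_eVec_of_ne (by omega) le_rfl hAi.1 (by omega)
    (by omega), mul_zero]

lemma inner_eVec_engelShift (hA : ∀ i, 1 ≤ (A i).natAbs ∧ (A i).natAbs ≤ d - 1) (m : ℤ) :
    ⟪eVec d d, engelShift d A δ m⟫ = 0 := by
  unfold engelShift
  split_ifs
  · exact inner_zero_right _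
  · rw [inner_smul_right, inner_eVec_engelU (hA _), mul_zero]

lemma norm_engelShift_of_odd (hA : ∀ i, 1 ≤ (A i).natAbs ∧ (A i).natAbs ≤ d - 1) {m : ℤ}
    (hm : m % 2 ≠ 0) : ‖engelShift d A δ m‖ = |δ| := by
  rw [engelShift, if_neg hm, norm_smul, norm_engelU (hA _), mul_one, Real.norm_eq_abs]

lemma norm_engelShift_le (hA : ∀ i, 1 ≤ (A i).natAbs ∧ (A i).natAbs ≤ d - 1) (hδ : 0 ≤ δ)
    (m : ℤ) : ‖engelShift d A δ m‖ ≤ δ := by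
  by_cases hm : m % 2 = 0
  · rw [engelShift, if_pos hm, norm_zero]
    exact hδ
  · rw [norm_engelShift_of_odd hA hm, abs_of_nonneg hδ]

lemma norm_engelStep_of_even (hd : 1 ≤ d) (hb : 0 ≤ b) {m : ℤ} (hm : m % 2 = 0) :
    ‖engelStep d A b δ m‖ = 2 * b := by
  rw [engelStep, engelShift, if_pos hm, add_zero, norm_smul, norm_eVec hd le_rfl, mul_one,
    Real.norm_eq_abs, abs_of_nonneg (by positivity)]

lemma norm_engelStep_of_odd (hA : ∀ i, 1 ≤ (A i).natAbs ∧ (A i).natAbs ≤ d - 1) {m : ℤ}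
    (hm : m % 2 ≠ 0) :
    ‖engelStep d A b δ m‖ = Real.sqrt (δ ^ 2 + 4 * b ^ 2) := by
  have hd : 1 ≤ d := by have := hA 0; omega
  rw [← Real.sqrt_mul_self (norm_nonneg _), engelStep,
    norm_add_sq_eq_norm_sq_add_norm_sq_real (by rw [inner_smul_left, inner_eVec_engelShift hA,
      mul_zero]),
    norm_smul, norm_eVec hd le_rfl, norm_engelShift_of_odd hA hm, Real.norm_eq_abs]
  simp only [mul_one, abs_mul_abs_self]
  congr 1
  ring

lemma norm_engelStep_lt_norm_sub (hA : ∀ i, 1 ≤ (A i).natAbs ∧ (A i).natAbs ≤ d - 1)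
    (hδ : 0 ≤ δ) (m : ℤ) {w : Euc d} (hw : ⟪eVec d d, w⟫ = 0)
    (hlt : 2 * δ < ‖w‖) : ‖engelStep d A b δ m‖ < ‖engelStep d A b δ m - w‖ :=
  norm_add_lt_norm_add_sub (by rw [inner_smul_left, inner_eVec_engelShift hA, mul_zero])
    (by rw [inner_smul_left, hw, mul_zero]) (by linarith [norm_engelShift_le hA hδ m])

lemma norm_engelStep_lt_norm_sub_of_mem_engelLayer
    (hA : ∀ i, 1 ≤ (A i).natAbs ∧ (A i).natAbs ≤ d - 1) (hδ : 0 ≤ δ) (hδa : δ < a)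
    (m : ℤ) {n : ℤ} {y z : Euc d} (hy : y ∈ engelLayer d A a b δ n)
    (hz : z ∈ engelLayer d A a b δ n) (hne : y ≠ z) :
    ‖engelStep d A b δ m‖ < ‖engelStep d A b δ m - (y - z)‖ := by
  rw [mem_engelLayer_iff] at hy hz
  have horth := inner_eVec_sub_of_mem_engelGrid hy hz
  have hlen := two_mul_le_norm_sub_of_mem_engelGrid hy hz (by rwa [Ne, sub_left_inj])
  rw [sub_sub_sub_cancel_right] at horth hlen
  exact norm_engelStep_lt_norm_sub hA hδ m horth (by linarith)

lemma dist_add_engelStep_lt (hA : ∀ i, 1 ≤ (A i).natAbs ∧ (A i).natAbs ≤ d - 1)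
    (hδ : 0 ≤ δ) (hδa : δ < a) (m : ℤ) {n : ℤ} {y z : Euc d} (hy : y ∈ engelLayer d A a b δ n)
    (hz : z ∈ engelLayer d A a b δ n) (hne : z ≠ y) :
    dist (y + engelStep d A b δ m) y < dist (y + engelStep d A b δ m) z := by
  have hfar := norm_engelStep_lt_norm_sub_of_mem_engelLayer hA hδ hδa m hz hy hne
  rwa [dist_self_add_left, dist_eq_norm, add_comm y, ← sub_sub_eq_add_sub]

lemma dist_sub_engelStep_lt (hA : ∀ i, 1 ≤ (A i).natAbs ∧ (A i).natAbs ≤ d - 1)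
    (hδ : 0 ≤ δ) (hδa : δ < a) (m : ℤ) {n : ℤ} {y z : Euc d} (hy : y ∈ engelLayer d A a b δ n)
    (hz : z ∈ engelLayer d A a b δ n) (hne : z ≠ y) :
    dist (y - engelStep d A b δ m) y < dist (y - engelStep d A b δ m) z := by
  have hfar := norm_engelStep_lt_norm_sub_of_mem_engelLayer hA hδ hδa m hy hz hne.symm
  rwa [dist_self_sub_left, dist_eq_norm, sub_right_comm, norm_sub_rev]

end Geometry

section Chain

variable {d : ℕ} {A : ℤ → ℤ} {a b δ : ℝ} {p : ℤ} {c : ℤ → Euc d}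

lemma engelChain_succ
    (hceven : ∀ j : ℤ, (p + j) % 2 = 0 → c (j + 1) = c j + (2 * b) • eVec d d)
    (hcodd : ∀ j i : ℤ, p + j = 2 * i - 1 →
      c (j + 1) = c j + (2 * b) • eVec d d + δ • engelU d A i) (j : ℤ) :
    c (j + 1) = c j + engelStep d A b δ (p + j) := by
  by_cases h : (p + j) % 2 = 0
  · rw [hceven j h, engelStep, engelShift, if_pos h, add_zero]
  · rw [hcodd j ((p + j + 1) / 2) (by omega), engelStep, engelShift, if_neg h, add_assoc]

lemma mem_engelLayer_of_succ (hstep : ∀ j, c (j + 1) = c j + engelStep d A b δ (p + j))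
    (h0 : c 0 ∈ engelLayer d A a b δ p) (j : ℤ) : c j ∈ engelLayer d A a b δ (p + j) := by
  have hper : Function.Periodic (fun j => c j - engelOffset d A b δ (p + j)) 1 := fun j => by
    simp only [hstep, ← add_assoc, engelOffset_add_one]
    abel
  have hj := hper.zsmul_eq j
  simp only [zsmul_one, Int.cast_id, add_zero] at hj
  rw [mem_engelLayer_iff, hj, ← mem_engelLayer_iff]
  exact h0

end Chain

/-- Lemma 5.3: for `0 < δ < a < b`, the chain `(x_j)` through `x ∈ X_p`
(defined by `x₀ = x`, `x_{j+1} = x_j + 2b·e_d` if `p+j` is even, and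
`x_{j+1} = x_j + 2b·e_d + δ·u_i` if `p+j = 2i-1` is odd) satisfies: `x_j` lies in layer
`X_{p+j}` and is the unique point of that layer closest to `x_{j+1}` and to `x_{j-1}`,
with `(|x_j - x_{j-1}|, |x_{j+1} - x_j|) = (2b, √(δ²+4b²))` if `p+j` is odd and
`(√(δ²+4b²), 2b)` if `p+j` is even. -/
theorem engel_chain_closest (d : ℕ) (hd : 2 ≤ d) (A : ℤ → ℤ) (hA : EngelSeq d A)
    (a b δ : ℝ) (hδ : 0 < δ) (hδa : δ < a) (hab : a < b)
    (p : ℤ) (x : Euc d) (hx : x ∈ engelLayer d A a b δ p)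
    (c : ℤ → Euc d) (hc0 : c 0 = x)
    (hceven : ∀ j : ℤ, (p + j) % 2 = 0 → c (j + 1) = c j + (2 * b) • eVec d d)
    (hcodd : ∀ j i : ℤ, p + j = 2 * i - 1 →
      c (j + 1) = c j + (2 * b) • eVec d d + δ • engelU d A i) :
    ∀ j : ℤ,
      c j ∈ engelLayer d A a b δ (p + j) ∧
      (∀ z ∈ engelLayer d A a b δ (p + j), z ≠ c j →
        dist (c (j + 1)) (c j) < dist (c (j + 1)) z ∧
        dist (c (j - 1)) (c j) < dist (c (j - 1)) z) ∧
      ((p + j) % 2 ≠ 0 → dist (c j) (c (j - 1)) = 2 * b ∧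
        dist (c (j + 1)) (c j) = Real.sqrt (δ ^ 2 + 4 * b ^ 2)) ∧
      ((p + j) % 2 = 0 → dist (c j) (c (j - 1)) = Real.sqrt (δ ^ 2 + 4 * b ^ 2) ∧
        dist (c (j + 1)) (c j) = 2 * b) := by
  have hb : 0 ≤ b := by linarith
  have hstep := engelChain_succ hceven hcodd
  have hmem := mem_engelLayer_of_succ hstep (hc0 ▸ hx)
  intro j
  have hpred : c (j - 1) = c j - engelStep d A b δ (p + (j - 1)) := by
    rw [eq_sub_iff_add_eq, ← sub_add_cancel j 1, hstep, sub_add_cancel]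
  have hback : dist (c j) (c (j - 1)) = ‖engelStep d A b δ (p + (j - 1))‖ := by
    rw [hpred, dist_comm, dist_self_sub_left]
  have hfwd : dist (c (j + 1)) (c j) = ‖engelStep d A b δ (p + j)‖ := by
    rw [hstep, dist_self_add_left]
  refine ⟨hmem j, fun z hz hne => ⟨?_, ?_⟩, fun hodd => ⟨?_, ?_⟩, fun heven => ⟨?_, ?_⟩⟩
  · rw [hstep]
    exact dist_add_engelStep_lt hA.1 hδ.le hδa _ (hmem j) hz hne
  · rw [hpred]
    exact dist_sub_engelStep_lt hA.1 hδ.le hδa _ (hmem j) hz hne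
  · rw [hback, norm_engelStep_of_even (by omega) hb (by omega)]
  · rw [hfwd, norm_engelStep_of_odd hA.1 hodd]
  · rw [hback, norm_engelStep_of_odd hA.1 (by omega)]
  · rw [hfwd, norm_engelStep_of_even (by omega) hb heven]
end
end
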